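/- Define, for each integer N ≥ 1, F_det(N) = 2^{−(N+3)}·Σ_{k=0}^{N} C(N,k)·( (N−2k−1)/√(k+1) + (N−2k+1)/√(N−k+1) )², p(N) = 1 − (N+2)/2^{N+1}, and F(N) = F_det(N)/p(N). Then p(N) → 1 and F(N) → 1 as N → ∞; that is, the qubit minimal port-based teleportation protocol is convergent: its performance pair (F(N), p(N)) tends to (1,1). -/

import Mathlib

open Finset Filter

/-- Entanglement fidelity of non-optimal deterministic qubit PBT with `N`
ports and square-root measurements:
`F_det(N) = 2^{−(N+3)}·Σ_{k=0}^{N} C(N,k)·((N−2k−1)/√(k+1) + (N−2k+1)/√(N−k+1))²`. -/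
noncomputable def Fdet (N : ℕ) : ℝ :=
  (2 : ℝ) ^ (-((N : ℝ) + 3)) *
    ∑ k ∈ Finset.range (N + 1),
      (N.choose k : ℝ) *
        (((N : ℝ) - 2 * k - 1) / Real.sqrt ((k : ℝ) + 1) +
          ((N : ℝ) - 2 * k + 1) / Real.sqrt ((N : ℝ) - (k : ℝ) + 1)) ^ 2

/-- Success probability of qubit minimal PBT with `N` ports:
`p(N) = 1 − (N+2)/2^{N+1}`. -/
noncomputable def psucc (N : ℕ) : ℝ := 1 - ((N : ℝ) + 2) / 2 ^ (N + 1)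

/-- Conditional entanglement fidelity of qubit minimal PBT. -/
noncomputable def Fmin (N : ℕ) : ℝ := Fdet N / psucc N

/-!
Put `x = k+1` and `y = N-k+1`, so that `x + y = N+2` and `y - x = N-2k`. Expanding the square,
`C(N,k)` times the `k`-th summand of `F_det` splits into `(N+1) C(N+2,k+1)`, `-4N C(N,k)` and a
cross term `2 C(N,k) ((N-2k)² - 1)/√(xy)`. Replacing `√(xy)` by its AM–GM bound `(N+2)/2` and
summing with the central moment `∑ C(N,k) (N-2k)² = N 2^N` gives
`F_det(N) = 1 - 3/(2(N+2)) - (N+1)/2^(N+2) + E(N)`. The error `E(N)` is nonnegative because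
`N-2k` is an integer, so `(N-2k)² ((N-2k)² - 1) ≥ 0`; and since `√(xy) ≥ √(N+1)`, the fourth
moment `∑ C(N,k) (N-2k)⁴ = N(3N-2) 2^N` bounds it by `3/(4√(N+1))`. Hence `F_det(N) → 1`, while
`p(N) → 1` because `(N+2)/2^(N+1) → 0`.
-/

open Real Topology

section BinomialMoments

variable {R : Type*} [CommRing R]

theorem sum_range_choose_cast (n : ℕ) : ∑ k ∈ range (n + 1), (n.choose k : R) = 2 ^ n := by
  rw [← Nat.cast_sum, Nat.sum_range_choose, Nat.cast_pow, Nat.cast_ofNat]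

theorem sum_range_choose_add_two_succ (n : ℕ) :
    ∑ k ∈ range (n + 1), ((n + 2).choose (k + 1) : R) = 2 ^ (n + 2) - 2 := by
  have h := sum_range_choose_cast (R := R) (n + 2)
  rw [sum_range_succ, sum_range_succ'] at h
  simp only [Nat.choose_self, Nat.choose_zero_right, Nat.cast_one] at h
  linear_combination h

theorem sum_range_choose_mul_succ (g : ℕ → R) (n : ℕ) :
    ∑ k ∈ range (n + 2), ((n + 1).choose k : R) * g k =
      ∑ k ∈ range (n + 1), (n.choose k : R) * (g k + g (k + 1)) := by
  rw [sum_choose_succ_mul (fun k _ ↦ g k) n, ← sum_add_distrib]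
  simp only [mul_add]

theorem sum_range_choose_mul_sub_two_mul_sq (n : ℕ) :
    ∑ k ∈ range (n + 1), (n.choose k : R) * ((n : R) - 2 * k) ^ 2 = (n : R) * 2 ^ n := by
  induction n with
  | zero => simp
  | succ n ih =>
    rw [show n + 1 + 1 = n + 2 from rfl, sum_range_choose_mul_succ]
    calc ∑ k ∈ range (n + 1), (n.choose k : R) *
          ((((n + 1 : ℕ) : R) - 2 * k) ^ 2 + (((n + 1 : ℕ) : R) - 2 * ((k + 1 : ℕ) : R)) ^ 2)
        = 2 * ∑ k ∈ range (n + 1), (n.choose k : R) * ((n : R) - 2 * k) ^ 2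
            + 2 * ∑ k ∈ range (n + 1), (n.choose k : R) := by
          rw [mul_sum, mul_sum, ← sum_add_distrib]
          refine sum_congr rfl fun k _ ↦ ?_
          push_cast
          ring
      _ = ((n + 1 : ℕ) : R) * 2 ^ (n + 1) := by
          rw [ih, sum_range_choose_cast]
          push_cast
          ring

theorem sum_range_choose_mul_sub_two_mul_pow_four (n : ℕ) :
    ∑ k ∈ range (n + 1), (n.choose k : R) * ((n : R) - 2 * k) ^ 4 =
      (n : R) * (3 * n - 2) * 2 ^ n := by
  induction n with
  | zero => simp
  | succ n ih =>
    rw [show n + 1 + 1 = n + 2 from rfl, sum_range_choose_mul_succ]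
    calc ∑ k ∈ range (n + 1), (n.choose k : R) *
          ((((n + 1 : ℕ) : R) - 2 * k) ^ 4 + (((n + 1 : ℕ) : R) - 2 * ((k + 1 : ℕ) : R)) ^ 4)
        = 2 * ∑ k ∈ range (n + 1), (n.choose k : R) * ((n : R) - 2 * k) ^ 4
            + 12 * ∑ k ∈ range (n + 1), (n.choose k : R) * ((n : R) - 2 * k) ^ 2
            + 2 * ∑ k ∈ range (n + 1), (n.choose k : R) := by
          rw [mul_sum, mul_sum, mul_sum, ← sum_add_distrib, ← sum_add_distrib]
          refine sum_congr rfl fun k _ ↦ ?_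
          push_cast
          ring
      _ = ((n + 1 : ℕ) : R) * (3 * ((n + 1 : ℕ) : R) - 2) * 2 ^ (n + 1) := by
          rw [ih, sum_range_choose_mul_sub_two_mul_sq, sum_range_choose_cast]
          push_cast
          ring

theorem sum_range_choose_mul_sub_two_mul_sq_sub_one (n : ℕ) :
    ∑ k ∈ range (n + 1), (n.choose k : R) * (((n : R) - 2 * k) ^ 2 - 1) =
      ((n : R) - 1) * 2 ^ n := by
  simp only [mul_sub, mul_one, sum_sub_distrib, sum_range_choose_mul_sub_two_mul_sq,
    sum_range_choose_cast]
  ring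

end BinomialMoments

theorem choose_add_two_succ_mul_mul_eq {N k : ℕ} (hk : k ≤ N) :
    ((N + 2).choose (k + 1) : ℝ) * ((k + 1) * (N - k + 1)) = (N + 1) * (N + 2) * N.choose k := by
  have h : (N + 2).choose (k + 1) * ((k + 1) * (N - k + 1)) = (N + 1) * (N + 2) * N.choose k := by
    rw [← Nat.sub_add_comm hk, ← mul_assoc, ← Nat.add_one_mul_choose_eq, mul_assoc,
      ← Nat.choose_mul_succ_eq]
    ring
  have h' := congrArg (Nat.cast : ℕ → ℝ) h
  push_cast [Nat.cast_sub hk] at h'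
  exact h'

theorem sq_div_sqrt_add_div_sqrt {x y : ℝ} (hx : 0 < x) (hy : 0 < y) :
    ((y - x - 1) / √x + (y - x + 1) / √y) ^ 2 =
      (x + y) * (x + y - 1) ^ 2 / (x * y) - 4 * (x + y - 2) + 4 * ((y - x) ^ 2 - 1) / (x + y)
        + 2 * ((y - x) ^ 2 * ((y - x) ^ 2 - 1) /
          (√x * √y * (x + y) * (x + y + 2 * (√x * √y)))) := by
  obtain ⟨s, hs, rfl⟩ : ∃ s, 0 < s ∧ x = s ^ 2 :=
    ⟨√x, sqrt_pos.2 hx, (sq_sqrt hx.le).symm⟩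
  obtain ⟨t, ht, rfl⟩ : ∃ t, 0 < t ∧ y = t ^ 2 :=
    ⟨√y, sqrt_pos.2 hy, (sq_sqrt hy.le).symm⟩
  rw [sqrt_sq hs.le, sqrt_sq ht.le]
  field_simp
  ring

/-- With `u = √(k+1) √(N-k+1)` one has `(N+2)² - 4u² = (N-2k)²`, so this equals
`((N-2k)² - 1) (1/u - 2/(N+2))`: the excess of the cross term `((N-2k)² - 1)/u` of the `k`-th
summand over its value at the AM–GM bound `u ≤ (N+2)/2`. -/
noncomputable def crossExcess (N k : ℕ) : ℝ :=
  ((N : ℝ) - 2 * k) ^ 2 * (((N : ℝ) - 2 * k) ^ 2 - 1) /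
    (√(k + 1) * √(N - k + 1) * (N + 2) * (N + 2 + 2 * (√(k + 1) * √(N - k + 1))))

theorem choose_mul_summand_eq {N k : ℕ} (hk : k ≤ N) :
    (N.choose k : ℝ) * (((N : ℝ) - 2 * k - 1) / √((k : ℝ) + 1) +
        ((N : ℝ) - 2 * k + 1) / √((N : ℝ) - (k : ℝ) + 1)) ^ 2 =
      (N + 1) * (N + 2).choose (k + 1) - 4 * N * N.choose k
        + 4 / (N + 2) * (N.choose k * (((N : ℝ) - 2 * k) ^ 2 - 1))
        + 2 * (N.choose k * crossExcess N k) := by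
  have hkN : (k : ℝ) ≤ N := by exact_mod_cast hk
  have hx : (0 : ℝ) < k + 1 := by positivity
  have hy : (0 : ℝ) < N - k + 1 := by linarith
  have h := sq_div_sqrt_add_div_sqrt hx hy
  rw [show (N : ℝ) - k + 1 - (k + 1) = N - 2 * k by ring,
    show (k : ℝ) + 1 + (N - k + 1) = N + 2 by ring] at h
  have hc : (N.choose k : ℝ) * ((N + 2) * (N + 2 - 1) ^ 2 / ((k + 1) * (N - k + 1))) =
      (N + 1) * (N + 2).choose (k + 1) := by
    rw [mul_div_assoc', div_eq_iff (by positivity)]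
    linear_combination (-(N : ℝ) - 1) * choose_add_two_succ_mul_mul_eq hk
  rw [h, crossExcess, ← hc]
  ring

theorem Fdet_eq (N : ℕ) :
    Fdet N = 1 - 3 / (2 * (N + 2)) - (N + 1) / 2 ^ (N + 2)
      + (∑ k ∈ range (N + 1), N.choose k * crossExcess N k) / 2 ^ (N + 2) := by
  have hpow : (2 : ℝ) ^ (-((N : ℝ) + 3)) = ((2 : ℝ) ^ (N + 3))⁻¹ := by
    rw [← rpow_natCast, ← rpow_neg zero_le_two, Nat.cast_add, Nat.cast_ofNat]
  rw [Fdet, sum_congr rfl fun k hk ↦ choose_mul_summand_eq (mem_range_succ_iff.1 hk),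
    sum_add_distrib, sum_add_distrib, sum_sub_distrib, ← mul_sum, ← mul_sum, ← mul_sum,
    ← mul_sum, sum_range_choose_add_two_succ, sum_range_choose_cast,
    sum_range_choose_mul_sub_two_mul_sq_sub_one, hpow]
  field_simp
  ring

theorem intCast_sq_mul_sq_sub_one_nonneg (z : ℤ) : 0 ≤ (z : ℝ) ^ 2 * ((z : ℝ) ^ 2 - 1) := by
  rcases eq_or_ne z 0 with rfl | hz
  · simp
  · have h : (1 : ℤ) ≤ z ^ 2 := sq_pos_of_ne_zero hz
    exact mul_nonneg (sq_nonneg _) (sub_nonneg.2 (by exact_mod_cast h))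

theorem crossExcess_nonneg (N k : ℕ) : 0 ≤ crossExcess N k := by
  have h := intCast_sq_mul_sq_sub_one_nonneg ((N : ℤ) - 2 * k)
  push_cast at h
  exact div_nonneg h (by positivity)

theorem crossExcess_le {N k : ℕ} (hk : k ≤ N) :
    crossExcess N k ≤ ((N : ℝ) - 2 * k) ^ 4 / ((N + 2) ^ 2 * √(N + 1)) := by
  have hkN : (k : ℝ) ≤ N := by exact_mod_cast hk
  have hx : (0 : ℝ) ≤ k + 1 := by positivity
  have hv : √((N : ℝ) + 1) ≤ √(k + 1) * √(N - k + 1) := by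
    rw [← sqrt_mul hx]
    exact sqrt_le_sqrt (by nlinarith [mul_nonneg (Nat.cast_nonneg' k) (sub_nonneg.2 hkN)])
  have hv0 : 0 < √((N : ℝ) + 1) := sqrt_pos.2 (by positivity)
  refine div_le_div₀ (by positivity) (by nlinarith [sq_nonneg ((N : ℝ) - 2 * k)])
    (by positivity) ?_
  calc ((N : ℝ) + 2) ^ 2 * √(N + 1) = √(N + 1) * (N + 2) * (N + 2) := by ring
    _ ≤ √(k + 1) * √(N - k + 1) * (N + 2) * (N + 2 + 2 * (√(k + 1) * √(N - k + 1))) :=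
      mul_le_mul (mul_le_mul_of_nonneg_right hv (by positivity))
        (le_add_of_nonneg_right (by positivity)) (by positivity) (by positivity)

theorem sum_choose_mul_crossExcess_div_le (N : ℕ) :
    (∑ k ∈ range (N + 1), N.choose k * crossExcess N k) / 2 ^ (N + 2) ≤
      3 / (4 * √(N + 1)) := by
  have hv0 : 0 < √((N : ℝ) + 1) := sqrt_pos.2 (by positivity)
  have hmoment : (N : ℝ) * (3 * N - 2) ≤ 3 * (N + 2) ^ 2 := by nlinarith
  rw [div_le_iff₀ (by positivity)]
  calc ∑ k ∈ range (N + 1), (N.choose k : ℝ) * crossExcess N k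
      ≤ ∑ k ∈ range (N + 1),
          (N.choose k : ℝ) * (((N : ℝ) - 2 * k) ^ 4 / ((N + 2) ^ 2 * √(N + 1))) :=
        sum_le_sum fun k hk ↦ mul_le_mul_of_nonneg_left (crossExcess_le (mem_range_succ_iff.1 hk))
          (Nat.cast_nonneg _)
    _ = N * (3 * N - 2) * 2 ^ N / ((N + 2) ^ 2 * √(N + 1)) := by
      simp_rw [mul_div_assoc']
      rw [← sum_div, sum_range_choose_mul_sub_two_mul_pow_four]
    _ ≤ 3 * (N + 2) ^ 2 * 2 ^ N / ((N + 2) ^ 2 * √(N + 1)) := by gcongr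
    _ = 3 / (4 * √(N + 1)) * 2 ^ (N + 2) := by
      field_simp
      ring

theorem tendsto_natCast_add_div_two_pow (c : ℝ) (d : ℕ) :
    Tendsto (fun N : ℕ ↦ ((N : ℝ) + c) / 2 ^ (N + d)) atTop (𝓝 0) := by
  have h₁ := tendsto_pow_const_div_const_pow_of_one_lt 1 one_lt_two
  have h₂ := tendsto_pow_atTop_nhds_zero_of_lt_one (r := (1 / 2 : ℝ)) (by norm_num)
    (by norm_num)
  convert (h₁.add (h₂.const_mul c)).div_const (2 ^ d) using 1
  · funext N
    rw [pow_add, pow_one, div_pow, one_pow]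
    field_simp
  · simp

theorem tendsto_psucc : Tendsto psucc atTop (𝓝 1) := by
  have h := (tendsto_natCast_add_div_two_pow 2 1).const_sub 1
  rw [sub_zero] at h
  exact h

theorem tendsto_Fdet : Tendsto Fdet atTop (𝓝 1) := by
  have hN (c : ℝ) : Tendsto (fun N : ℕ ↦ (N : ℝ) + c) atTop atTop :=
    tendsto_atTop_add_const_right _ _ tendsto_natCast_atTop_atTop
  have hrat : Tendsto (fun N : ℕ ↦ 3 / (2 * ((N : ℝ) + 2))) atTop (𝓝 0) :=
    tendsto_const_nhds.div_atTop ((hN 2).const_mul_atTop two_pos)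
  have hexcess : Tendsto (fun N ↦ (∑ k ∈ range (N + 1), N.choose k * crossExcess N k) /
      2 ^ (N + 2)) atTop (𝓝 0) :=
    squeeze_zero (fun N ↦ div_nonneg (sum_nonneg fun k _ ↦
        mul_nonneg (Nat.cast_nonneg _) (crossExcess_nonneg N k)) (by positivity))
      sum_choose_mul_crossExcess_div_le
      (tendsto_const_nhds.div_atTop ((tendsto_sqrt_atTop.comp (hN 1)).const_mul_atTop four_pos))
  have h := ((tendsto_const_nhds (x := (1 : ℝ)) |>.sub hrat).sub
    (tendsto_natCast_add_div_two_pow 1 2)).add hexcess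
  rw [sub_zero, sub_zero, add_zero] at h
  exact h.congr fun N ↦ (Fdet_eq N).symm

/-- Qubit minimal PBT is convergent: its performance pair
`(F(N), p(N))` tends to `(1, 1)` as the number of ports `N → ∞`. -/
theorem mPBT_convergent :
    Tendsto psucc atTop (nhds 1) ∧ Tendsto Fmin atTop (nhds 1) := by
  have h := tendsto_Fdet.div tendsto_psucc one_ne_zero
  rw [div_one] at h
  exact ⟨tendsto_psucc, h⟩
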